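/- There exists a unique ℂ-algebra homomorphism F from the Weyl algebra A_N to itself satisfying F(X_i) = −D_i and F(D_i) = X_i for all i = 1,…,N, and this F is bijective, i.e., F is a ℂ-algebra automorphism of A_N. (This automorphism realizes the Fourier transform of algebraic D-modules on ℂ^N, which endows any left A_N-module with a new left A_N-module structure.) -/

import Mathlib

/-!
`A_N` is only given as an algebra of operators on `ℂ[x_1, …, x_N]`, so `F` has to be assembled
from maps that visibly preserve it. Conjugation by the unipotent operator `exp (a Δ / 2)`,
`Δ = ∑ D_i ^ 2`, is the shear `X_i ↦ X_i + a D_i`, `D_i ↦ D_i`. Transposition with respect to the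
pairing `⟨p, q⟩ = (p(D) q)(0)` is an anti-automorphism exchanging `X_i` and `D_i`, so the transpose
of that shear is the shear `X_i ↦ X_i`, `D_i ↦ D_i + a X_i`. The quarter turn
`X_i ↦ -D_i`, `D_i ↦ X_i` is the product of three shears, with `a = -1, 1, -1`.
Uniqueness holds because the `X_i` and `D_i` generate `A_N`, and any such `F` satisfies `F⁴ = 1`.
-/

open MvPolynomial

/-- The operator of multiplication by the `i`-th variable on the polynomial ring
`ℂ[x_1, …, x_N]`. -/
noncomputable def Xop (N : ℕ) (i : Fin N) :
    Module.End ℂ (MvPolynomial (Fin N) ℂ) :=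
  LinearMap.mulLeft ℂ (X i)

/-- The `i`-th formal partial derivative on the polynomial ring `ℂ[x_1, …, x_N]`. -/
noncomputable def Dop (N : ℕ) (i : Fin N) :
    Module.End ℂ (MvPolynomial (Fin N) ℂ) :=
  (pderiv i).toLinearMap

/-- The Weyl algebra `A_N`: the ℂ-subalgebra of `End ℂ (ℂ[x_1, …, x_N])` generated by the
multiplication operators `X_1, …, X_N` and the partial derivatives `D_1, …, D_N`. -/
noncomputable def Weyl (N : ℕ) :
    Subalgebra ℂ (Module.End ℂ (MvPolynomial (Fin N) ℂ)) :=
  Algebra.adjoin ℂ (Set.range (Xop N) ∪ Set.range (Dop N))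

/-- `X_i` as an element of the Weyl algebra. -/
noncomputable def XW (N : ℕ) (i : Fin N) : Weyl N :=
  ⟨Xop N i, Algebra.subset_adjoin (Set.mem_union_left _ ⟨i, rfl⟩)⟩

/-- `D_i` as an element of the Weyl algebra. -/
noncomputable def DW (N : ℕ) (i : Fin N) : Weyl N :=
  ⟨Dop N i, Algebra.subset_adjoin (Set.mem_union_right _ ⟨i, rfl⟩)⟩



namespace MvPolynomial

section AevalOfCommute

variable {R A σ : Type*} [CommRing R] [Ring A] [Algebra R A]

open scoped IsMulCommutative in
noncomputable def aevalOfCommute (y : σ → A) (hy : ∀ i j, Commute (y i) (y j)) :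
    MvPolynomial σ R →ₐ[R] A :=
  haveI := Algebra.isMulCommutative_adjoin R (s := Set.range y)
    (by rintro _ ⟨i, rfl⟩ _ ⟨j, rfl⟩; exact hy i j)
  (Algebra.adjoin R (Set.range y)).val.comp
    (aeval fun i => ⟨y i, Algebra.subset_adjoin ⟨i, rfl⟩⟩)

variable (y : σ → A) (hy : ∀ i j, Commute (y i) (y j))

@[simp]
lemma aevalOfCommute_X (i : σ) : aevalOfCommute (R := R) y hy (X i) = y i := by
  simp [aevalOfCommute]

lemma mul_aevalOfCommute_sub [DecidableEq σ] {z : A} {i : σ} {c : R}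
    (hz : ∀ j, z * y j - y j * z = if j = i then algebraMap R A c else 0)
    (p : MvPolynomial σ R) :
    z * aevalOfCommute y hy p - aevalOfCommute y hy p * z =
      c • aevalOfCommute y hy (pderiv i p) := by
  induction p using MvPolynomial.induction_on with
  | C r => simp [Algebra.commutes]
  | add p q hp hq => simp only [map_add, mul_add, add_mul, smul_add, ← hp, ← hq]; abel
  | mul_X p j hp =>
    have hX : c • aevalOfCommute y hy (pderiv i (X j : MvPolynomial σ R)) = z * y j - y j * z := by
      rw [hz, pderiv_X, Pi.single_apply]
      split_ifs <;> simp [Algebra.algebraMap_eq_smul_one]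
    simp only [pderiv_mul, map_add, map_mul, aevalOfCommute_X, smul_add]
    rw [← smul_mul_assoc, ← hp, ← mul_smul_comm, hX]
    noncomm_ring

end AevalOfCommute

variable {R σ : Type*} [CommRing R]

lemma pderiv_pderiv_comm (i j : σ) (p : MvPolynomial σ R) :
    pderiv i (pderiv j p) = pderiv j (pderiv i p) := by
  have : ⁅(pderiv i : Derivation R (MvPolynomial σ R) _), pderiv j⁆ = 0 :=
    derivation_ext fun k => by
      classical rw [Derivation.commutator_apply]; simp only [pderiv_X, Pi.single_apply]
      split_ifs <;> simp
  rw [← sub_eq_zero, ← Derivation.commutator_apply, this, Derivation.zero_apply]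

lemma eq_one_of_map_X_mul {W : Module.End R (MvPolynomial σ R)} (h1 : W 1 = 1)
    (hX : ∀ i p, W (X i * p) = X i * W p) : W = 1 := by
  refine LinearMap.ext fun p => ?_
  induction p using MvPolynomial.induction_on with
  | C r => rw [C_eq_smul_one, map_smul, h1, Module.End.one_apply]
  | add p q hp hq => simp [hp, hq]
  | mul_X p i hp => simp [mul_comm p, hX, hp]

lemma eq_zero_of_forall_pderiv_mem [IsDomain R] [CharZero R] {S : Set (MvPolynomial σ R)}
    (hS : ∀ q ∈ S, ∀ i, pderiv i q ∈ S) (h0 : ∀ q ∈ S, constantCoeff q = 0)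
    {q : MvPolynomial σ R} (hq : q ∈ S) : q = 0 := by
  ext m
  induction m using WellFoundedLT.induction generalizing q with
  | ind m ih =>
    rcases eq_or_ne m 0 with rfl | hm
    · simpa [constantCoeff_eq] using h0 q hq
    obtain ⟨i, hi⟩ := Finsupp.support_nonempty_iff.mpr hm
    rw [Finsupp.mem_support_iff] at hi
    have hle : Finsupp.single i 1 ≤ m :=
      Finsupp.single_le_iff.mpr (Nat.one_le_iff_ne_zero.mpr hi)
    have hlt : m - Finsupp.single i 1 < m := by
      refine lt_of_le_of_ne tsub_le_self fun h => hi ?_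
      have := congr($h i)
      simp only [Finsupp.tsub_apply, Finsupp.single_eq_same] at this
      omega
    have := ih _ hlt (hS q hq i)
    rw [coeff_pderiv, tsub_add_cancel_of_le hle, coeff_zero] at this
    simpa [Nat.cast_add_one_ne_zero] using this

end MvPolynomial

lemma commute_add_smul {R A : Type*} [CommRing R] [Ring A] [Algebra R A] {x y d e : A} (a : R)
    (hxy : Commute x y) (hde : Commute d e) (h : d * y - y * d = e * x - x * e) :
    Commute (x + a • d) (y + a • e) := by
  have h' : x * e + d * y = y * d + e * x := by
    rw [← sub_eq_zero] at h ⊢; rw [← h]; abel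
  calc (x + a • d) * (y + a • e) = x * y + a • (x * e + d * y) + (a * a) • (d * e) := by
        simp only [add_mul, mul_add, smul_mul_assoc, mul_smul_comm, smul_add, smul_smul]; abel
    _ = y * x + a • (y * d + e * x) + (a * a) • (e * d) := by rw [hxy.eq, h', hde.eq]
    _ = (y + a • e) * (x + a • d) := by
        simp only [add_mul, mul_add, smul_mul_assoc, mul_smul_comm, smul_add, smul_smul]; abel

section Adjoint

variable {R M : Type*} [CommRing R] [AddCommGroup M] [Module R M] {B : LinearMap.BilinForm R M}

lemma LinearMap.IsAdjointPair.eq_of_separatingRight (hB : B.SeparatingRight)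
    {f g g' : Module.End R M} (h : B.IsAdjointPair B f g) (h' : B.IsAdjointPair B f g') :
    g = g' :=
  LinearMap.ext fun y => sub_eq_zero.mp <| hB _ fun x => by rw [map_sub, ← h, ← h', sub_self]

lemma LinearMap.exists_isAdjointPair_of_mem_adjoin {s : Set (Module.End R M)}
    (hs : ∀ f ∈ s, ∃ g ∈ Algebra.adjoin R s, B.IsAdjointPair B f g)
    {f : Module.End R M} (hf : f ∈ Algebra.adjoin R s) :
    ∃ g ∈ Algebra.adjoin R s, B.IsAdjointPair B f g := by
  induction hf using Algebra.adjoin_induction with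
  | mem f hf => exact hs f hf
  | algebraMap r =>
    refine ⟨algebraMap R _ r, Subalgebra.algebraMap_mem _ r, ?_⟩
    simpa [Algebra.algebraMap_eq_smul_one] using (LinearMap.isAdjointPair_one (B := B)).smul r
  | add f f' _ _ h h' =>
    obtain ⟨g, hg, hfg⟩ := h
    obtain ⟨g', hg', hfg'⟩ := h'
    exact ⟨g + g', add_mem hg hg', hfg.add hfg'⟩
  | mul f f' _ _ h h' =>
    obtain ⟨g, hg, hfg⟩ := h
    obtain ⟨g', hg', hfg'⟩ := h'
    exact ⟨g' * g, mul_mem hg' hg, hfg.mul hfg'⟩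

namespace Subalgebra

variable (A : Subalgebra R (Module.End R M)) (hA : ∀ f ∈ A, ∃ g ∈ A, B.IsAdjointPair B f g)
  (hB : B.SeparatingRight)

noncomputable def adjoint (f : A) : A :=
  ⟨(hA f f.2).choose, (hA f f.2).choose_spec.1⟩

lemma isAdjointPair_adjoint (f : A) : B.IsAdjointPair B f (A.adjoint hA f) :=
  (hA f f.2).choose_spec.2

include hB in
lemma adjoint_eq_of_isAdjointPair {f g : A} (h : B.IsAdjointPair B f g) : A.adjoint hA f = g :=
  Subtype.ext <| (A.isAdjointPair_adjoint hA f).eq_of_separatingRight hB h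

noncomputable def adjointAlgHom : A →ₐ[R] Aᵐᵒᵖ where
  toFun f := .op (A.adjoint hA f)
  map_one' := congrArg _ (A.adjoint_eq_of_isAdjointPair hA hB LinearMap.isAdjointPair_one)
  map_mul' f f' := by
    rw [← MulOpposite.op_mul]
    exact congrArg _ <| A.adjoint_eq_of_isAdjointPair hA hB <|
      (A.isAdjointPair_adjoint hA f).mul (A.isAdjointPair_adjoint hA f')
  map_zero' := congrArg _ (A.adjoint_eq_of_isAdjointPair hA hB LinearMap.isAdjointPair_zero)
  map_add' f f' := by
    rw [← MulOpposite.op_add]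
    exact congrArg _ <| A.adjoint_eq_of_isAdjointPair hA hB <|
      (A.isAdjointPair_adjoint hA f).add (A.isAdjointPair_adjoint hA f')
  commutes' r := by
    refine congrArg _ (A.adjoint_eq_of_isAdjointPair hA hB ?_)
    simpa [Algebra.algebraMap_eq_smul_one] using (LinearMap.isAdjointPair_one (B := B)).smul r

end Subalgebra

end Adjoint

namespace Weyl

variable {N : ℕ}

lemma Xop_apply (i : Fin N) (p : MvPolynomial (Fin N) ℂ) : Xop N i p = X i * p := rfl

lemma Dop_apply (i : Fin N) (p : MvPolynomial (Fin N) ℂ) : Dop N i p = pderiv i p := rfl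

lemma Xop_commute (i j : Fin N) : Commute (Xop N i) (Xop N j) :=
  LinearMap.ext fun p => by simp only [Module.End.mul_apply, Xop_apply, mul_left_comm]

lemma Dop_commute (i j : Fin N) : Commute (Dop N i) (Dop N j) :=
  LinearMap.ext fun p => by simp only [Module.End.mul_apply, Dop_apply, pderiv_pderiv_comm]

lemma Dop_mul_Xop_sub (i j : Fin N) :
    Dop N i * Xop N j - Xop N j * Dop N i = if j = i then 1 else 0 := by
  refine LinearMap.ext fun p => ?_
  simp only [LinearMap.sub_apply, Module.End.mul_apply, Dop_apply, Xop_apply, pderiv_mul,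
    pderiv_X, Pi.single_apply]
  split_ifs <;> simp

noncomputable def shearGen (N : ℕ) (a : ℂ) (i : Fin N) :
    Module.End ℂ (MvPolynomial (Fin N) ℂ) :=
  Xop N i + a • Dop N i

lemma shearGen_commute (a : ℂ) (i j : Fin N) : Commute (shearGen N a i) (shearGen N a j) :=
  commute_add_smul a (Xop_commute i j) (Dop_commute i j) <| by
    rw [Dop_mul_Xop_sub, Dop_mul_Xop_sub]; simp [eq_comm]

lemma Dop_mul_shearGen_sub (a : ℂ) (i j : Fin N) :
    Dop N i * shearGen N a j - shearGen N a j * Dop N i =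
      if j = i then algebraMap ℂ (Module.End ℂ (MvPolynomial (Fin N) ℂ)) 1 else 0 := by
  rw [map_one, shearGen, mul_add, add_mul, mul_smul_comm, smul_mul_assoc, (Dop_commute i j).eq,
    ← Dop_mul_Xop_sub]
  abel

/-- `p ↦ p(X + a D) 1`, which is `exp (a Δ / 2)` with `Δ = ∑ D_i ^ 2`. -/
noncomputable def shearOp (N : ℕ) (a : ℂ) : Module.End ℂ (MvPolynomial (Fin N) ℂ) :=
  LinearMap.applyₗ 1 ∘ₗ (aevalOfCommute (shearGen N a) (shearGen_commute a)).toLinearMap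

lemma shearOp_apply (a : ℂ) (p : MvPolynomial (Fin N) ℂ) :
    shearOp N a p = aevalOfCommute (shearGen N a) (shearGen_commute a) p 1 := rfl

lemma shearOp_one (a : ℂ) : shearOp N a 1 = 1 := by
  simp [shearOp_apply]

lemma shearOp_X_mul (a : ℂ) (i : Fin N) (p : MvPolynomial (Fin N) ℂ) :
    shearOp N a (X i * p) = X i * shearOp N a p + a • pderiv i (shearOp N a p) := by
  rw [shearOp_apply, map_mul, aevalOfCommute_X, Module.End.mul_apply, shearGen,
    LinearMap.add_apply, LinearMap.smul_apply, Xop_apply, Dop_apply, shearOp_apply]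

lemma shearOp_pderiv (a : ℂ) (i : Fin N) (p : MvPolynomial (Fin N) ℂ) :
    shearOp N a (pderiv i p) = pderiv i (shearOp N a p) := by
  have h := congr($(mul_aevalOfCommute_sub _ (shearGen_commute a) (Dop_mul_shearGen_sub a i) p) 1)
  simpa [Dop_apply, shearOp_apply] using h.symm

lemma shearOp_neg_mul_shearOp (a : ℂ) : shearOp N (-a) * shearOp N a = 1 := by
  refine eq_one_of_map_X_mul (by simp [shearOp_one]) fun i p => ?_
  simp only [Module.End.mul_apply, shearOp_X_mul, map_add, map_smul, shearOp_pderiv]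
  rw [neg_smul, neg_add_cancel_right]

noncomputable def shearEquiv (N : ℕ) (a : ℂ) :
    MvPolynomial (Fin N) ℂ ≃ₗ[ℂ] MvPolynomial (Fin N) ℂ :=
  .ofLinearMap (shearOp N a) (shearOp N (-a))
    (by have h := shearOp_neg_mul_shearOp (N := N) (-a); rw [neg_neg] at h; exact h)
    (shearOp_neg_mul_shearOp a)

lemma shearEquiv_apply (a : ℂ) (p : MvPolynomial (Fin N) ℂ) :
    shearEquiv N a p = shearOp N a p := rfl

lemma conj_shearEquiv_Xop (a : ℂ) (i : Fin N) :
    LinearEquiv.conjAlgEquiv ℂ (shearEquiv N a) (Xop N i) = shearGen N a i := by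
  refine LinearMap.ext fun p => ?_
  rw [LinearEquiv.conjAlgEquiv_apply, LinearMap.comp_apply, LinearMap.comp_apply,
    LinearEquiv.coe_coe, LinearEquiv.coe_coe, Xop_apply, shearEquiv_apply, shearOp_X_mul,
    ← shearEquiv_apply, LinearEquiv.apply_symm_apply]
  rfl

lemma conj_shearEquiv_Dop (a : ℂ) (i : Fin N) :
    LinearEquiv.conjAlgEquiv ℂ (shearEquiv N a) (Dop N i) = Dop N i := by
  refine LinearMap.ext fun p => ?_
  rw [LinearEquiv.conjAlgEquiv_apply, LinearMap.comp_apply, LinearMap.comp_apply,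
    LinearEquiv.coe_coe, LinearEquiv.coe_coe, Dop_apply, shearEquiv_apply, shearOp_pderiv,
    ← shearEquiv_apply, LinearEquiv.apply_symm_apply, Dop_apply]

lemma le_comap_conj_shearEquiv (a : ℂ) :
    Weyl N ≤ (Weyl N).comap (LinearEquiv.conjAlgEquiv ℂ (shearEquiv N a)).toAlgHom := by
  refine Algebra.adjoin_le ?_
  rintro _ (⟨i, rfl⟩ | ⟨i, rfl⟩)
  · change LinearEquiv.conjAlgEquiv ℂ (shearEquiv N a) (Xop N i) ∈ Weyl N
    rw [conj_shearEquiv_Xop]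
    exact add_mem (XW N i).2 (Subalgebra.smul_mem _ (DW N i).2 a)
  · change LinearEquiv.conjAlgEquiv ℂ (shearEquiv N a) (Dop N i) ∈ Weyl N
    rw [conj_shearEquiv_Dop]
    exact (DW N i).2

noncomputable def shear (N : ℕ) (a : ℂ) : Weyl N →ₐ[ℂ] Weyl N :=
  ((LinearEquiv.conjAlgEquiv ℂ (shearEquiv N a)).toAlgHom.comp (Weyl N).val).codRestrict
    (Weyl N) fun T => le_comap_conj_shearEquiv a T.2

lemma shear_XW (a : ℂ) (i : Fin N) : shear N a (XW N i) = XW N i + a • DW N i :=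
  Subtype.ext (conj_shearEquiv_Xop a i)

lemma shear_DW (a : ℂ) (i : Fin N) : shear N a (DW N i) = DW N i :=
  Subtype.ext (conj_shearEquiv_Dop a i)

/-- `⟨p, q⟩ = (p(D) q)(0)`. -/
noncomputable def pairing (N : ℕ) : LinearMap.BilinForm ℂ (MvPolynomial (Fin N) ℂ) :=
  (aevalOfCommute (Dop N) Dop_commute).toLinearMap.compr₂ (lcoeff ℂ 0)

lemma pairing_apply (p q : MvPolynomial (Fin N) ℂ) :
    pairing N p q = coeff 0 (aevalOfCommute (Dop N) Dop_commute p q) := rfl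

lemma pairing_X_mul (i : Fin N) (p q : MvPolynomial (Fin N) ℂ) :
    pairing N (X i * p) q = pairing N p (pderiv i q) := by
  rw [pairing_apply, pairing_apply, mul_comm, map_mul, aevalOfCommute_X, Module.End.mul_apply,
    Dop_apply]

lemma pairing_pderiv (i : Fin N) (p q : MvPolynomial (Fin N) ℂ) :
    pairing N (pderiv i p) q = pairing N p (X i * q) := by
  have hz (j : Fin N) : Xop N i * Dop N j - Dop N j * Xop N i =
      if j = i then algebraMap ℂ (Module.End ℂ (MvPolynomial (Fin N) ℂ)) (-1) else 0 := by
    rw [← neg_sub, Dop_mul_Xop_sub]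
    split_ifs <;> simp_all [eq_comm]
  have h := congr(coeff 0 ($(mul_aevalOfCommute_sub (Dop N) Dop_commute hz p) q))
  simpa [Xop_apply, ← constantCoeff_eq, pairing_apply, eq_comm] using h

lemma pairing_separatingRight : (pairing N).SeparatingRight := fun q hq =>
  eq_zero_of_forall_pderiv_mem (S := {q | ∀ p, pairing N p q = 0})
    (fun q hq i p => by rw [← pairing_X_mul]; exact hq _)
    (fun q hq => by simpa [pairing_apply, constantCoeff_eq] using hq 1) hq

lemma exists_isAdjointPair_pairing :
    ∀ T ∈ Weyl N, ∃ T' ∈ Weyl N, (pairing N).IsAdjointPair (pairing N) T T' := fun _ hT =>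
  LinearMap.exists_isAdjointPair_of_mem_adjoin (by
    rintro _ (⟨i, rfl⟩ | ⟨i, rfl⟩)
    exacts [⟨Dop N i, (DW N i).2, pairing_X_mul i⟩, ⟨Xop N i, (XW N i).2, pairing_pderiv i⟩]) hT

noncomputable def transpose (N : ℕ) : Weyl N →ₐ[ℂ] (Weyl N)ᵐᵒᵖ :=
  (Weyl N).adjointAlgHom exists_isAdjointPair_pairing pairing_separatingRight

lemma transpose_XW (i : Fin N) : transpose N (XW N i) = .op (DW N i) :=
  congrArg MulOpposite.op <| (Weyl N).adjoint_eq_of_isAdjointPair (B := pairing N)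
    exists_isAdjointPair_pairing pairing_separatingRight (f := XW N i) (pairing_X_mul i)

lemma transpose_DW (i : Fin N) : transpose N (DW N i) = .op (XW N i) :=
  congrArg MulOpposite.op <| (Weyl N).adjoint_eq_of_isAdjointPair (B := pairing N)
    exists_isAdjointPair_pairing pairing_separatingRight (f := DW N i) (pairing_pderiv i)

noncomputable def dualShear (N : ℕ) (a : ℂ) : Weyl N →ₐ[ℂ] Weyl N :=
  (AlgEquiv.opOp ℂ (Weyl N)).symm.toAlgHom.comp <|
    (AlgHom.op (transpose N)).comp <| (AlgHom.op (shear N a)).comp (transpose N)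

lemma dualShear_XW (a : ℂ) (i : Fin N) : dualShear N a (XW N i) = XW N i := by
  simp [dualShear, transpose_XW, transpose_DW, shear_DW]

lemma dualShear_DW (a : ℂ) (i : Fin N) : dualShear N a (DW N i) = DW N i + a • XW N i := by
  simp [dualShear, transpose_XW, transpose_DW, shear_XW]

noncomputable def fourier (N : ℕ) : Weyl N →ₐ[ℂ] Weyl N :=
  (shear N (-1)).comp <| (dualShear N 1).comp (shear N (-1))

lemma fourier_XW (i : Fin N) : fourier N (XW N i) = - DW N i := by
  simp [fourier, shear_XW, shear_DW, dualShear_XW, dualShear_DW]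
  module

lemma fourier_DW (i : Fin N) : fourier N (DW N i) = XW N i := by
  simp [fourier, shear_XW, shear_DW, dualShear_DW]
  module

lemma algHom_ext {A : Type*} [Semiring A] [Algebra ℂ A] {F G : Weyl N →ₐ[ℂ] A}
    (hX : ∀ i, F (XW N i) = G (XW N i)) (hD : ∀ i, F (DW N i) = G (DW N i)) : F = G :=
  AlgHom.adjoin_ext <| by rintro _ (⟨i, rfl⟩ | ⟨i, rfl⟩); exacts [hX i, hD i]

end Weyl

theorem fourier_exists_unique_and_bijective_general (N : ℕ) :
    (∃! F : Weyl N →ₐ[ℂ] Weyl N,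
        ∀ i : Fin N, F (XW N i) = - DW N i ∧ F (DW N i) = XW N i) ∧
    (∀ F : Weyl N →ₐ[ℂ] Weyl N,
        (∀ i : Fin N, F (XW N i) = - DW N i ∧ F (DW N i) = XW N i) →
        Function.Bijective F) := by
  refine ⟨⟨Weyl.fourier N, fun i => ⟨Weyl.fourier_XW i, Weyl.fourier_DW i⟩, fun F hF => ?_⟩,
    fun F hF => ?_⟩
  · exact Weyl.algHom_ext (fun i => by rw [(hF i).1, Weyl.fourier_XW])
      (fun i => by rw [(hF i).2, Weyl.fourier_DW])
  -- `simp` does not fire `map_neg` and `neg_neg` on `Weyl N`: its instances agree with the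
  -- generic ones only after unfolding.
  have hneg (x : Weyl N) : F (-x) = -F x := map_neg F x
  have hneg_neg (x : Weyl N) : - -x = x := neg_neg x
  have hF4 : F.comp (F.comp (F.comp F)) = AlgHom.id ℂ (Weyl N) :=
    Weyl.algHom_ext (fun i => by simp [hF, hneg, hneg_neg]) (fun i => by simp [hF, hneg, hneg_neg])
  have hinv (x : Weyl N) : F (F (F (F x))) = x := congr($hF4 x)
  exact ⟨Function.LeftInverse.injective (g := fun x => F (F (F x))) hinv,
    Function.RightInverse.surjective (g := fun x => F (F (F x))) hinv⟩

/-- There is a unique ℂ-algebra homomorphism `F : A_N → A_N` with `F(X_i) = -D_i` and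
`F(D_i) = X_i` for all `i`, and this `F` is bijective (a ℂ-algebra automorphism): the
Fourier transform of algebraic D-modules on `ℂ^N`. -/
theorem fourier_exists_unique_and_bijective (N : ℕ) (hN : 0 < N) :
    (∃! F : Weyl N →ₐ[ℂ] Weyl N,
        ∀ i : Fin N, F (XW N i) = - DW N i ∧ F (DW N i) = XW N i) ∧
    (∀ F : Weyl N →ₐ[ℂ] Weyl N,
        (∀ i : Fin N, F (XW N i) = - DW N i ∧ F (DW N i) = XW N i) →
        Function.Bijective F) :=
  fourier_exists_unique_and_bijective_general N
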